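/- For every integer n ≥ 1, all a, b, c, d, s, t ∈ ℝ with a ≤ c, b ≤ d and s ≤ t, and all u⃗, v⃗ ∈ [−∞, ∞)^{n+1} with u_i ≤ v_i for all i, the following inequalities hold (all integrals below are finite and positive): ∫_{−∞}^{s} h_n^{a,u⃗}(x) G(b − x) dx · ∫_{−∞}^{t} h_n^{c,v⃗}(x) G(d − x) dx ≥ ∫_{−∞}^{t} h_n^{a,u⃗}(x) G(b − x) dx · ∫_{−∞}^{s} h_n^{c,v⃗}(x) G(d − x) dx; and in particular ∫_{−∞}^{s} h_n^{a,u⃗}(x) G(b − x) dx · ∫_{−∞}^{∞} h_n^{c,v⃗}(x) G(d − x) dx ≥ ∫_{−∞}^{∞} h_n^{a,u⃗}(x) G(b − x) dx · ∫_{−∞}^{s} h_n^{c,v⃗}(x) G(d − x) dx. -/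

import Mathlib

open MeasureTheory Filter ProbabilityTheory

noncomputable section
/-- `G = exp (-H^RW)`. -/
def Gof (HRW : ℝ → ℝ) : ℝ → ℝ := fun x => Real.exp (-(HRW x))

/-- The Boltzmann factor `exp (-H t)` for an extended real `t`, with the convention
`exp (-H (-∞)) = 1`. -/
def expNegH (H : ℝ → ℝ) (t : EReal) : ℝ :=
  if t = ⊥ then 1 else if t = ⊤ then 0 else Real.exp (-(H t.toReal))

/-- Normalization of a (finite, nonzero) measure into a probability measure. -/
def normalizeM {α : Type*} [MeasurableSpace α] (μ : Measure α) : Measure α :=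
  (μ Set.univ)⁻¹ • μ

/-- Fill interior coordinates `w` into a path on `ℤ` with boundary values `x` at `a` and `y`
at `b` (constant extension outside `[a,b]`). -/
def fillPath (a b : ℤ) (x y : ℝ) (w : ↥(Finset.Ioo a b : Finset ℤ) → ℝ) : ℤ → ℝ :=
  fun j => if h : j ∈ Finset.Ioo a b then w ⟨j, h⟩ else if j ≤ a then x else y

/-- Random walk density `∏_{m=a+1}^{b} G(ℓ(m) - ℓ(m-1))`. -/
def rwDensity (G : ℝ → ℝ) (a b : ℤ) (ℓ : ℤ → ℝ) : ℝ :=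
  ∏ m ∈ Finset.Ioc a b, G (ℓ m - ℓ (m - 1))

/-- Interaction weight `exp (-∑_{m=a}^{b-1} H(z(m+1) - ℓ(m)))` with a bottom boundary
`z : ℤ → [-∞,∞)`. -/
def interWeight (H : ℝ → ℝ) (a b : ℤ) (z : ℤ → EReal) (ℓ : ℤ → ℝ) : ℝ :=
  ∏ m ∈ Finset.Ico a b, expNegH H (z (m + 1) - ((ℓ m : ℝ) : EReal))

/-- Unnormalized version of the measure `P^{a,b,x,y,z}_{H,H^RW}`. -/
def bridgeLawAux (G H : ℝ → ℝ) (a b : ℤ) (x y : ℝ) (z : ℤ → EReal) : Measure (ℤ → ℝ) :=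
  Measure.map (fillPath a b x y)
    ((volume : Measure (↥(Finset.Ioo a b : Finset ℤ) → ℝ)).withDensity
      fun w => ENNReal.ofReal (rwDensity G a b (fillPath a b x y w) *
        interWeight H a b z (fillPath a b x y w)))

/-- The law `P^{a,b,x,y,z}_{H,H^RW}` of a random walk bridge from `(a,x)` to `(b,y)` with
underlying jump density `G` interacting with the bottom boundary `z` through the
Hamiltonian `H`. -/
def bridgeLaw (G H : ℝ → ℝ) (a b : ℤ) (x y : ℝ) (z : ℤ → EReal) : Measure (ℤ → ℝ) :=
  normalizeM (bridgeLawAux G H a b x y z)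

/-- The law `P^{a,b,x,y}_{H^RW}` of a free random walk bridge from `(a,x)` to `(b,y)`. -/
def freeBridgeLaw (G : ℝ → ℝ) (a b : ℤ) (x y : ℝ) : Measure (ℤ → ℝ) :=
  bridgeLaw G (fun _ => 0) a b x y (fun _ => (⊥ : EReal))

/-- The normalizing constant `Z_{H,H^RW}(a,b,x,y,z)`. -/
def Znorm (G H : ℝ → ℝ) (a b : ℤ) (x y : ℝ) (z : ℤ → EReal) : ℝ :=
  ∫ ℓ, interWeight H a b z ℓ ∂(freeBridgeLaw G a b x y)

/-- The chain of points `x₀ = c, x₁, …, x_{n-1}, x_n = y` appearing in the definition of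
`h_n^{c,z⃗}`. -/
def chainPt (n : ℕ) (c y : ℝ) (w : Fin (n - 1) → ℝ) (i : ℕ) : ℝ :=
  if i = 0 then c else if h : i - 1 < n - 1 then w ⟨i - 1, h⟩ else y

/-- The function `h_n^{c,z⃗}(y)` of Lemma 2.12 (Lemma 2.9): the unnormalized density at `y` of
the endpoint of an interacting random walk started from `c`, with bottom boundary `z⃗`. -/
noncomputable def hFun (HRW H : ℝ → ℝ) (n : ℕ) (c : ℝ) (z : ℕ → EReal) (y : ℝ) : ℝ :=
  ∫ w : Fin (n - 1) → ℝ,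
    ∏ i ∈ Finset.Icc 1 n,
      Gof HRW (chainPt n c y w i - chainPt n c y w (i - 1)) *
        expNegH H (z (i + 1) - ((chainPt n c y w i : ℝ) : EReal))

open scoped ENNReal
open Set

/-!
Unfolding the last step of the chain gives the recursion
`h_{k+1}(y) = (∫ h_k(r) G(y - r) dr) · exp(-H(z_{k+2} - y))`.
Since `H^RW` is convex, the kernel `(y, r) ↦ G(y - r)` is totally positive of order two, and
since `H` is convex and nondecreasing, so is `(z, y) ↦ exp(-H(z - y))`. Composition with such
kernels preserves the likelihood ratio order, so by induction `h_n^{c,v⃗} / h_n^{a,u⃗}` is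
nondecreasing, and it stays so after multiplying by `G(d - x) / G(b - x)`. For two densities
in likelihood ratio order, comparing the mass below `s` with the mass below `t ≥ s` (or on all
of `ℝ`) is exactly the stated inequality.
-/

section LikelihoodRatio

variable {α β : Type*}

/-- `f ≤ g` in the likelihood ratio order: `g / f` is nondecreasing, written without division. -/
def LikelihoodRatioLE [LE α] (f g : α → ℝ≥0∞) : Prop :=
  ∀ ⦃x y⦄, x ≤ y → f y * g x ≤ f x * g y

/-- The rearrangement inequality; Mathlib's `mul_add_mul_le_mul_add_mul` needs cancellative
addition, which `ℝ≥0∞` lacks. -/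
theorem ENNReal.mul_add_mul_le_mul_add_mul {a b c d : ℝ≥0∞} (hab : a ≤ b) (hcd : c ≤ d) :
    a * d + b * c ≤ a * c + b * d := by
  obtain ⟨b, rfl⟩ := exists_add_of_le hab
  obtain ⟨d, rfl⟩ := exists_add_of_le hcd
  calc a * (c + d) + (a + b) * c = a * c + (a * c + a * d + b * c) := by ring
    _ ≤ a * c + (a * c + a * d + b * c + b * d) := add_le_add_right le_self_add _
    _ = a * c + (a + b) * (c + d) := by ring

theorem MeasureTheory.lintegral_add_comp_swap [MeasurableSpace β] {μ : Measure β}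
    [SFinite μ] {F : β × β → ℝ≥0∞} (hF : Measurable F) :
    ∫⁻ p, F p + F p.swap ∂μ.prod μ = 2 * ∫⁻ p, F p ∂μ.prod μ := by
  rw [lintegral_add_left hF, lintegral_prod_swap, two_mul]

theorem likelihoodRatioLE_ofReal [LE α] {f g : α → ℝ} (hf : ∀ x, 0 ≤ f x)
    (h : ∀ ⦃x y⦄, x ≤ y → f y * g x ≤ f x * g y) :
    LikelihoodRatioLE (fun x => ENNReal.ofReal (f x)) (fun x => ENNReal.ofReal (g x)) :=
  fun x y hxy => by
    rw [← ENNReal.ofReal_mul (hf y), ← ENNReal.ofReal_mul (hf x)]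
    exact ENNReal.ofReal_le_ofReal (h hxy)

namespace LikelihoodRatioLE

theorem mul [LE α] {f g f' g' : α → ℝ≥0∞} (h : LikelihoodRatioLE f g)
    (h' : LikelihoodRatioLE f' g') :
    LikelihoodRatioLE (fun x => f x * f' x) (fun x => g x * g' x) := fun x y hxy =>
  calc f y * f' y * (g x * g' x) = f y * g x * (f' y * g' x) := by ring
    _ ≤ f x * g y * (f' x * g' y) := mul_le_mul' (h hxy) (h' hxy)
    _ = f x * f' x * (g y * g' y) := by ring

/-- Composition with a kernel that is totally positive of order two (`hK`) preserves the order.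
Symmetrizing the double integral under `(r, r') ↦ (r', r)` reduces this to the pointwise
rearrangement inequality. -/
theorem lintegral_mul_kernel [LE α] [LinearOrder β] [MeasurableSpace β] {μ : Measure β}
    [SFinite μ] {f g : β → ℝ≥0∞} {K : α → β → ℝ≥0∞} (hfg : LikelihoodRatioLE f g)
    (hK : ∀ ⦃r r'⦄, r ≤ r' → LikelihoodRatioLE (K · r) (K · r'))
    (hf : Measurable f) (hg : Measurable g) (hKm : ∀ x, Measurable (K x)) :
    LikelihoodRatioLE (fun x => ∫⁻ r, f r * K x r ∂μ) (fun x => ∫⁻ r, g r * K x r ∂μ) := by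
  intro x y hxy
  set L : β × β → ℝ≥0∞ := fun p => f p.1 * K y p.1 * (g p.2 * K x p.2)
  set R : β × β → ℝ≥0∞ := fun p => f p.1 * K x p.1 * (g p.2 * K y p.2)
  have hpair : ∀ r r', r ≤ r' → L (r, r') + L (r', r) ≤ R (r, r') + R (r', r) := by
    intro r r' hr
    calc L (r, r') + L (r', r)
        = f r' * g r * (K x r * K y r') + f r * g r' * (K y r * K x r') := by simp only [L]; ring
      _ ≤ f r' * g r * (K y r * K x r') + f r * g r' * (K x r * K y r') :=
        ENNReal.mul_add_mul_le_mul_add_mul (hfg hr) (hK hr hxy)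
      _ = R (r, r') + R (r', r) := by simp only [R]; ring
  have hsymm : ∀ p, L p + L p.swap ≤ R p + R p.swap := by
    rintro ⟨r, r'⟩
    rcases le_total r r' with hr | hr
    · exact hpair r r' hr
    · simpa only [Prod.swap_prod_mk, add_comm] using hpair r' r hr
  have hprod : ∀ φ ψ : β → ℝ≥0∞, Measurable φ → Measurable ψ →
      (∫⁻ r, φ r ∂μ) * ∫⁻ r, ψ r ∂μ = ∫⁻ p, φ p.1 * ψ p.2 ∂μ.prod μ :=
    fun φ ψ hφ hψ => (lintegral_prod_mul hφ.aemeasurable hψ.aemeasurable).symm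
  dsimp only
  rw [hprod (fun r => f r * K y r) (fun r => g r * K x r) (hf.mul (hKm y)) (hg.mul (hKm x)),
    hprod (fun r => f r * K x r) (fun r => g r * K y r) (hf.mul (hKm x)) (hg.mul (hKm y))]
  have hL : Measurable L := by fun_prop
  have hR : Measurable R := by fun_prop
  refine (ENNReal.mul_le_mul_iff_right two_ne_zero ENNReal.ofNat_ne_top).mp ?_
  rw [← lintegral_add_comp_swap hL, ← lintegral_add_comp_swap hR]
  exact lintegral_mono hsymm

theorem setLIntegral_mul_setLIntegral_le [LE α] [MeasurableSpace α] {μ : Measure α}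
    {f g : α → ℝ≥0∞} (hfg : LikelihoodRatioLE f g) (hf : Measurable f) (hg : Measurable g)
    {S T : Set α} (hS : MeasurableSet S) (hT : MeasurableSet T) (hST : S ⊆ T)
    (hle : ∀ x ∈ S, ∀ y ∉ S, x ≤ y) :
    (∫⁻ x in T, f x ∂μ) * ∫⁻ x in S, g x ∂μ ≤ (∫⁻ x in S, f x ∂μ) * ∫⁻ x in T, g x ∂μ := by
  have hsplit : ∀ φ : α → ℝ≥0∞, ∫⁻ x in T, φ x ∂μ = ∫⁻ x in S, φ x ∂μ + ∫⁻ x in T \ S, φ x ∂μ :=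
    fun φ => by rw [← lintegral_inter_add_sdiff φ T hS, inter_eq_right.mpr hST]
  have hcross : (∫⁻ y in T \ S, f y ∂μ) * ∫⁻ x in S, g x ∂μ ≤
      (∫⁻ x in S, f x ∂μ) * ∫⁻ y in T \ S, g y ∂μ := by
    rw [mul_comm, ← lintegral_lintegral_mul hg.aemeasurable hf.aemeasurable,
      ← lintegral_lintegral_mul hf.aemeasurable hg.aemeasurable]
    refine setLIntegral_mono' hS fun x hx => setLIntegral_mono' (hT.diff hS) fun y hy => ?_
    rw [mul_comm]
    exact hfg (hle x hx y hy.2)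
  rw [hsplit f, hsplit g, add_mul, mul_add]
  gcongr

end LikelihoodRatioLE

end LikelihoodRatio

theorem ConvexOn.map_add_map_le_of_add_eq {s : Set ℝ} {φ : ℝ → ℝ} (hφ : ConvexOn ℝ s φ)
    {a b c d : ℝ} (hc : c ∈ s) (hd : d ∈ s) (hca : c ≤ a) (had : a ≤ d) (hsum : a + b = c + d) :
    φ a + φ b ≤ φ c + φ d := by
  obtain rfl | hcd := (hca.trans had).eq_or_lt
  · obtain rfl : a = c := le_antisymm had hca
    obtain rfl : b = a := by linarith
    rfl
  have hdc : 0 < d - c := sub_pos.2 hcd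
  set t := (d - a) / (d - c)
  have ht0 : 0 ≤ t := div_nonneg (sub_nonneg.2 had) hdc.le
  have ht1 : 0 ≤ 1 - t := sub_nonneg.2 (div_le_one_of_le₀ (by linarith) hdc.le)
  have ht : t * (d - c) = d - a := div_mul_cancel₀ _ hdc.ne'
  have ha : t * c + (1 - t) * d = a := by linear_combination -ht
  have hb : (1 - t) * c + t * d = b := by linear_combination ht - hsum
  have h1 := hφ.2 hc hd ht0 ht1 (add_sub_cancel t 1)
  have h2 := hφ.2 hc hd ht1 ht0 (sub_add_cancel 1 t)
  simp only [smul_eq_mul, ha, hb] at h1 h2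
  linarith

section

variable {HRW H : ℝ → ℝ}

theorem Gof_nonneg (x : ℝ) : 0 ≤ Gof HRW x := (Real.exp_pos _).le

theorem continuous_Gof (hG : Continuous HRW) : Continuous (Gof HRW) :=
  Real.continuous_exp.comp hG.neg

theorem Gof_sub_mul_Gof_sub_le (hG : ConvexOn ℝ univ HRW) {p p' q q' : ℝ} (hp : p ≤ p')
    (hq : q ≤ q') : Gof HRW (p - q') * Gof HRW (p' - q) ≤ Gof HRW (p - q) * Gof HRW (p' - q') := by
  simp only [Gof, ← Real.exp_add, Real.exp_le_exp]
  linarith [hG.map_add_map_le_of_add_eq (a := p - q) (b := p' - q') (c := p - q') (d := p' - q)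
    trivial trivial (by linarith) (by linarith) (by ring)]

theorem expNegH_nonneg (t : EReal) : 0 ≤ expNegH H t := by
  unfold expNegH; split_ifs <;> positivity

theorem expNegH_le_one (hH : ∀ x, 0 ≤ H x) (t : EReal) : expNegH H t ≤ 1 := by
  unfold expNegH; split_ifs
  · exact le_rfl
  · exact zero_le_one
  · exact Real.exp_le_one_iff.mpr (neg_nonpos.mpr (hH _))

@[simp]
theorem expNegH_coe (t : ℝ) : expNegH H t = Real.exp (-H t) := by
  simp [expNegH]

@[simp]
theorem expNegH_bot : expNegH H ⊥ = 1 := if_pos rfl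

@[simp]
theorem expNegH_top : expNegH H ⊤ = 0 := by simp [expNegH]

theorem continuous_expNegH_sub (hH : Continuous H) (z : EReal) :
    Continuous fun x : ℝ => expNegH H (z - x) := by
  induction z with
  | bot => simpa only [EReal.bot_sub, expNegH_bot] using continuous_const
  | top => simpa only [EReal.top_sub_coe, expNegH_top] using continuous_const
  | coe a =>
    simp only [← EReal.coe_sub, expNegH_coe]
    fun_prop

theorem expNegH_sub_mul_expNegH_sub_le (hH : ConvexOn ℝ univ H) (hH' : Monotone H)
    {u v : EReal} (huv : u ≤ v) {x y : ℝ} (hxy : x ≤ y) :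
    expNegH H (u - y) * expNegH H (v - x) ≤ expNegH H (u - x) * expNegH H (v - y) := by
  induction u with
  | bot =>
    induction v with
    | bot => simp
    | top => simp
    | coe b =>
      simp only [EReal.bot_sub, ← EReal.coe_sub, expNegH_bot, expNegH_coe, one_mul,
        Real.exp_le_exp, neg_le_neg_iff]
      exact hH' (by linarith)
  | top => simp [top_le_iff.mp huv]
  | coe a =>
    induction v with
    | bot => exact absurd (le_bot_iff.mp huv) (EReal.coe_ne_bot a)
    | top => simp
    | coe b =>
      have hab : a ≤ b := EReal.coe_le_coe_iff.mp huv
      simp only [← EReal.coe_sub, expNegH_coe, ← Real.exp_add, Real.exp_le_exp]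
      linarith [hH.map_add_map_le_of_add_eq (a := a - x) (b := b - y) (c := a - y) (d := b - x)
        trivial trivial (by linarith) (by linarith) (by ring)]

def hIntegrand (HRW H : ℝ → ℝ) (n : ℕ) (c : ℝ) (z : ℕ → EReal) (y : ℝ)
    (w : Fin (n - 1) → ℝ) : ℝ :=
  ∏ i ∈ Finset.Icc 1 n, Gof HRW (chainPt n c y w i - chainPt n c y w (i - 1)) *
    expNegH H (z (i + 1) - ((chainPt n c y w i : ℝ) : EReal))

/-- `hFun` as a lower Lebesgue integral, to which Tonelli applies without integrability
hypotheses. -/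
def hFunENNReal (HRW H : ℝ → ℝ) (n : ℕ) (c : ℝ) (z : ℕ → EReal) (y : ℝ) : ℝ≥0∞ :=
  ∫⁻ w, ENNReal.ofReal (hIntegrand HRW H n c z y w)

theorem hIntegrand_nonneg (n : ℕ) (c : ℝ) (z : ℕ → EReal) (y : ℝ) (w : Fin (n - 1) → ℝ) :
    0 ≤ hIntegrand HRW H n c z y w :=
  Finset.prod_nonneg fun _ _ => mul_nonneg (Gof_nonneg _) (expNegH_nonneg _)

theorem continuous_chainPt (n : ℕ) (c : ℝ) (i : ℕ) :
    Continuous fun p : ℝ × (Fin (n - 1) → ℝ) => chainPt n c p.1 p.2 i := by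
  unfold chainPt
  split_ifs <;> fun_prop

theorem continuous_hIntegrand (hG : Continuous HRW) (hH : Continuous H) (n : ℕ) (c : ℝ)
    (z : ℕ → EReal) :
    Continuous fun p : ℝ × (Fin (n - 1) → ℝ) => hIntegrand HRW H n c z p.1 p.2 :=
  continuous_finsetProd _ fun i _ =>
    ((continuous_Gof hG).comp ((continuous_chainPt n c i).sub (continuous_chainPt n c _))).mul
      ((continuous_expNegH_sub hH _).comp (continuous_chainPt n c i))

theorem measurable_hFunENNReal (hG : Continuous HRW) (hH : Continuous H) (n : ℕ) (c : ℝ)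
    (z : ℕ → EReal) : Measurable (hFunENNReal HRW H n c z) :=
  (continuous_hIntegrand hG hH n c z).measurable.ennreal_ofReal.lintegral_prod_right'

theorem hFun_eq_toReal (hG : Continuous HRW) (hH : Continuous H) (n : ℕ) (c : ℝ)
    (z : ℕ → EReal) (y : ℝ) : hFun HRW H n c z y = (hFunENNReal HRW H n c z y).toReal :=
  integral_eq_lintegral_of_nonneg_ae (ae_of_all _ (hIntegrand_nonneg n c z y))
    ((continuous_hIntegrand hG hH n c z).comp (Continuous.prodMk_right y)).aestronglyMeasurable

theorem hFunENNReal_one (c : ℝ) (z : ℕ → EReal) (y : ℝ) :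
    hFunENNReal HRW H 1 c z y = ENNReal.ofReal (Gof HRW (y - c) * expNegH H (z 2 - y)) := by
  simp [hFunENNReal, hIntegrand, chainPt, volume_pi]

theorem chainPt_snoc {k : ℕ} (c y r : ℝ) (w : Fin k → ℝ) {i : ℕ} (hi : i ≤ k + 1) :
    chainPt (k + 2) c y (Fin.snoc w r) i = chainPt (k + 1) c r w i := by
  simp only [chainPt, Nat.add_sub_cancel]
  split_ifs <;> simp_all [Fin.snoc]

theorem chainPt_last (n : ℕ) (c y : ℝ) (w : Fin (n + 1 - 1) → ℝ) :
    chainPt (n + 1) c y w (n + 1) = y := by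
  simp [chainPt]

theorem hIntegrand_snoc (k : ℕ) (c : ℝ) (z : ℕ → EReal) (y r : ℝ) (w : Fin k → ℝ) :
    hIntegrand HRW H (k + 2) c z y (Fin.snoc w r) =
      hIntegrand HRW H (k + 1) c z r w * (Gof HRW (y - r) * expNegH H (z (k + 3) - y)) := by
  rw [hIntegrand, Finset.prod_Icc_succ_top (by omega)]
  simp only [Nat.add_sub_cancel]
  rw [chainPt_last (k + 1), chainPt_snoc c y r w le_rfl, chainPt_last k]
  congr 1
  refine Finset.prod_congr rfl fun i hi => ?_
  have hik := (Finset.mem_Icc.mp hi).2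
  rw [chainPt_snoc c y r w hik, chainPt_snoc c y r w (by omega)]

theorem hFunENNReal_add_two (hG : Continuous HRW) (hH : Continuous H) (k : ℕ) (c : ℝ)
    (z : ℕ → EReal) (y : ℝ) :
    hFunENNReal HRW H (k + 2) c z y =
      (∫⁻ r, hFunENNReal HRW H (k + 1) c z r * ENNReal.ofReal (Gof HRW (y - r))) *
        ENNReal.ofReal (expNegH H (z (k + 3) - y)) := by
  have hsplit := (volume_preserving_piFinSuccAbove (fun _ : Fin (k + 1) => ℝ) (Fin.last k)).symm
  have hmeas : Measurable fun w => ENNReal.ofReal (hIntegrand HRW H (k + 2) c z y w) :=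
    ((continuous_hIntegrand hG hH _ c z).comp (Continuous.prodMk_right y)).measurable.ennreal_ofReal
  -- `Fin (k + 2 - 1)` agrees with `Fin (k + 1)` only up to unfolding
  change ∫⁻ w : Fin (k + 1) → ℝ, _ = _
  rw [← hsplit.lintegral_comp_emb (MeasurableEquiv.measurableEmbedding _), Measure.volume_eq_prod,
    lintegral_prod _ ?meas, ← lintegral_mul_const' _ _ ENNReal.ofReal_ne_top]
  case meas => exact (hmeas.comp (MeasurableEquiv.measurable _)).aemeasurable
  refine lintegral_congr fun r => ?_
  simp only [MeasurableEquiv.piFinSuccAbove_symm_apply, Fin.insertNthEquiv, Equiv.coe_fn_mk,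
    Fin.insertNth_last', hIntegrand_snoc, ENNReal.ofReal_mul (hIntegrand_nonneg _ _ _ _ _),
    ENNReal.ofReal_mul (Gof_nonneg _)]
  rw [lintegral_mul_const' _ _ (by finiteness), mul_assoc]
  rfl

theorem lintegral_ofReal_Gof_sub (hG1 : ∫ x, Gof HRW x = 1) (y : ℝ) :
    ∫⁻ r, ENNReal.ofReal (Gof HRW (y - r)) = 1 := by
  rw [lintegral_sub_left_eq_self (fun x => ENNReal.ofReal (Gof HRW x)) y,
    ← ofReal_integral_eq_lintegral_ofReal (Integrable.of_integral_ne_zero (by simp [hG1]))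
      (ae_of_all _ Gof_nonneg), hG1, ENNReal.ofReal_one]

theorem measurable_ofReal_Gof_sub (hG : Continuous HRW) (y : ℝ) :
    Measurable fun r => ENNReal.ofReal (Gof HRW (y - r)) :=
  ((continuous_Gof hG).comp (continuous_sub_left y)).measurable.ennreal_ofReal

theorem hFunENNReal_succ_le (hG : Continuous HRW) (hH : Continuous H) (hH0 : ∀ x, 0 ≤ H x)
    {C : ℝ} (hC : ∀ x, Gof HRW x ≤ C) (hG1 : ∫ x, Gof HRW x = 1) (k : ℕ) (c : ℝ)
    (z : ℕ → EReal) (y : ℝ) : hFunENNReal HRW H (k + 1) c z y ≤ ENNReal.ofReal C := by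
  induction k generalizing y with
  | zero =>
    rw [hFunENNReal_one]
    exact ENNReal.ofReal_le_ofReal
      ((mul_le_of_le_one_right (Gof_nonneg _) (expNegH_le_one hH0 _)).trans (hC _))
  | succ k ih =>
    rw [hFunENNReal_add_two hG hH]
    calc _ ≤ (∫⁻ r, ENNReal.ofReal C * ENNReal.ofReal (Gof HRW (y - r))) * 1 := by
          gcongr with r
          · exact ih r
          · exact ENNReal.ofReal_le_one.mpr (expNegH_le_one hH0 _)
      _ = ENNReal.ofReal C := by
        rw [lintegral_const_mul' _ _ ENNReal.ofReal_ne_top, lintegral_ofReal_Gof_sub hG1,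
          mul_one, mul_one]

theorem likelihoodRatioLE_ofReal_Gof_sub (hG : ConvexOn ℝ univ HRW) {q q' : ℝ} (hq : q ≤ q') :
    LikelihoodRatioLE (fun x => ENNReal.ofReal (Gof HRW (x - q)))
      (fun x => ENNReal.ofReal (Gof HRW (x - q'))) :=
  likelihoodRatioLE_ofReal (fun _ => Gof_nonneg _) fun _ _ hxy =>
    (mul_comm _ _).trans_le (Gof_sub_mul_Gof_sub_le hG hxy hq)

theorem likelihoodRatioLE_hFunENNReal (hG : Continuous HRW) (hH : Continuous H)
    (hGc : ConvexOn ℝ univ HRW) (hHc : ConvexOn ℝ univ H) (hHm : Monotone H) {a c : ℝ}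
    (hac : a ≤ c) {u v : ℕ → EReal} (huv : ∀ i, u i ≤ v i) (k : ℕ) :
    LikelihoodRatioLE (hFunENNReal HRW H (k + 1) a u) (hFunENNReal HRW H (k + 1) c v) := by
  have hwall : ∀ i, LikelihoodRatioLE (fun x : ℝ => ENNReal.ofReal (expNegH H (u i - x)))
      (fun x => ENNReal.ofReal (expNegH H (v i - x))) := fun i =>
    likelihoodRatioLE_ofReal (fun _ => expNegH_nonneg _) fun _ _ hxy =>
      expNegH_sub_mul_expNegH_sub_le hHc hHm (huv i) hxy
  induction k with
  | zero =>
    convert (likelihoodRatioLE_ofReal_Gof_sub hGc hac).mul (hwall 2) using 1 <;>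
      exact funext fun y => by rw [hFunENNReal_one, ENNReal.ofReal_mul (Gof_nonneg _)]
  | succ k ih =>
    have hkernel := ih.lintegral_mul_kernel (μ := volume)
      (fun r r' hr => likelihoodRatioLE_ofReal_Gof_sub hGc hr) (measurable_hFunENNReal hG hH _ a u)
      (measurable_hFunENNReal hG hH _ c v) (measurable_ofReal_Gof_sub hG)
    convert hkernel.mul (hwall (k + 3)) using 1 <;>
      exact funext (hFunENNReal_add_two hG hH k _ _)

theorem lintegral_hFunENNReal_mul_Gof_sub_ne_top (hG : Continuous HRW) (hH : Continuous H)
    (hH0 : ∀ x, 0 ≤ H x) {C : ℝ} (hC : ∀ x, Gof HRW x ≤ C) (hG1 : ∫ x, Gof HRW x = 1)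
    {μ : Measure ℝ} (hμ : μ ≤ volume) (k : ℕ) (c b : ℝ) (z : ℕ → EReal) :
    ∫⁻ x, hFunENNReal HRW H (k + 1) c z x * ENNReal.ofReal (Gof HRW (b - x)) ∂μ ≠ ⊤ := by
  refine ne_top_of_le_ne_top (b := ENNReal.ofReal C) ENNReal.ofReal_ne_top ?_
  calc _ ≤ ∫⁻ x, ENNReal.ofReal C * ENNReal.ofReal (Gof HRW (b - x)) :=
        lintegral_mono' hμ fun x => by gcongr; exact hFunENNReal_succ_le hG hH hH0 hC hG1 k c z x
    _ = ENNReal.ofReal C := by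
      rw [lintegral_const_mul' _ _ ENNReal.ofReal_ne_top, lintegral_ofReal_Gof_sub hG1, mul_one]

theorem integral_hFun_mul_Gof_sub_eq_toReal (hG : Continuous HRW) (hH : Continuous H)
    {μ : Measure ℝ} {n : ℕ} {c b : ℝ} {z : ℕ → EReal}
    (hfin : ∫⁻ x, hFunENNReal HRW H n c z x * ENNReal.ofReal (Gof HRW (b - x)) ∂μ ≠ ⊤) :
    ∫ x, hFun HRW H n c z x * Gof HRW (b - x) ∂μ =
      (∫⁻ x, hFunENNReal HRW H n c z x * ENNReal.ofReal (Gof HRW (b - x)) ∂μ).toReal := by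
  have hm : Measurable fun x => hFunENNReal HRW H n c z x * ENNReal.ofReal (Gof HRW (b - x)) :=
    (measurable_hFunENNReal hG hH n c z).mul (measurable_ofReal_Gof_sub hG b)
  rw [← integral_toReal hm.aemeasurable (ae_lt_top hm hfin)]
  simp only [hFun_eq_toReal hG hH, ENNReal.toReal_mul, ENNReal.toReal_ofReal (Gof_nonneg _)]

end

theorem statement6_general (HRW H : ℝ → ℝ)
    (hG1 : Continuous HRW) (hG2 : ConvexOn ℝ Set.univ HRW)
    (hG3 : ∃ C : ℝ, ∀ x, Gof HRW x ≤ C) (hG4 : ∫ x : ℝ, Gof HRW x = 1)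
    (hH1 : Continuous H) (hH2 : ∀ x, 0 ≤ H x)
    (hH4 : ConvexOn ℝ Set.univ H) (hH5 : Monotone H)
    (n : ℕ) (hn : 1 ≤ n) (a b c d s t : ℝ) (hac : a ≤ c) (hbd : b ≤ d) (hst : s ≤ t)
    (u v : ℕ → EReal) (huv : ∀ i, u i ≤ v i) :
    (∫ x in Set.Iic s, hFun HRW H n a u x * Gof HRW (b - x)) *
        (∫ x in Set.Iic t, hFun HRW H n c v x * Gof HRW (d - x)) ≥
      (∫ x in Set.Iic t, hFun HRW H n a u x * Gof HRW (b - x)) *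
        (∫ x in Set.Iic s, hFun HRW H n c v x * Gof HRW (d - x)) ∧
    (∫ x in Set.Iic s, hFun HRW H n a u x * Gof HRW (b - x)) *
        (∫ x : ℝ, hFun HRW H n c v x * Gof HRW (d - x)) ≥
      (∫ x : ℝ, hFun HRW H n a u x * Gof HRW (b - x)) *
        (∫ x in Set.Iic s, hFun HRW H n c v x * Gof HRW (d - x)) := by
  obtain ⟨C, hC⟩ := hG3
  obtain ⟨k, rfl⟩ := Nat.exists_eq_add_of_le' hn
  have hfin {μ : Measure ℝ} (hμ : μ ≤ volume) :=
    lintegral_hFunENNReal_mul_Gof_sub_ne_top hG1 hH1 hH2 hC hG4 hμ k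
  have hLR := (likelihoodRatioLE_hFunENNReal hG1 hH1 hG2 hH4 hH5 hac huv k).mul
    (likelihoodRatioLE_ofReal (fun _ => Gof_nonneg _) fun _ _ hxy =>
      Gof_sub_mul_Gof_sub_le hG2 hbd hxy)
  have hF := (measurable_hFunENNReal hG1 hH1 (k + 1) a u).mul (measurable_ofReal_Gof_sub hG1 b)
  have hF' := (measurable_hFunENNReal hG1 hH1 (k + 1) c v).mul (measurable_ofReal_Gof_sub hG1 d)
  have hlower : ∀ x ∈ Iic s, ∀ y ∉ Iic s, x ≤ y := fun x hx y hy => hx.trans (not_le.mp hy).le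
  simp only [integral_hFun_mul_Gof_sub_eq_toReal hG1 hH1 (hfin Measure.restrict_le_self _ _ _),
    integral_hFun_mul_Gof_sub_eq_toReal hG1 hH1 (hfin le_rfl _ _ _), ge_iff_le]
  simp only [← ENNReal.toReal_mul]
  constructor
  · refine ENNReal.toReal_mono (ENNReal.mul_ne_top (hfin Measure.restrict_le_self _ _ _)
      (hfin Measure.restrict_le_self _ _ _)) ?_
    exact hLR.setLIntegral_mul_setLIntegral_le hF hF' measurableSet_Iic measurableSet_Iic
      (Iic_subset_Iic.mpr hst) hlower
  · refine ENNReal.toReal_mono (ENNReal.mul_ne_top (hfin Measure.restrict_le_self _ _ _)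
      (hfin le_rfl _ _ _)) ?_
    simpa only [Measure.restrict_univ] using hLR.setLIntegral_mul_setLIntegral_le hF hF'
      measurableSet_Iic MeasurableSet.univ (subset_univ _) hlower

/-- Lemma 2.12 (Lemma 2.9): monotonicity of the conditional cumulative distribution
functions built out of `h_n^{c,z⃗}` with respect to the boundary data, in the form of a
correlation inequality. -/
theorem statement6 (HRW H : ℝ → ℝ)
    (hG1 : Continuous HRW) (hG2 : ConvexOn ℝ Set.univ HRW)
    (hG3 : ∃ C : ℝ, ∀ x, Gof HRW x ≤ C) (hG4 : ∫ x : ℝ, Gof HRW x = 1)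
    (hH1 : Continuous H) (hH2 : ∀ x, 0 ≤ H x) (hH3 : Tendsto H atBot (nhds 0))
    (hH4 : ConvexOn ℝ Set.univ H) (hH5 : Monotone H)
    (n : ℕ) (hn : 1 ≤ n) (a b c d s t : ℝ) (hac : a ≤ c) (hbd : b ≤ d) (hst : s ≤ t)
    (u v : ℕ → EReal) (hu : ∀ i, u i ≠ ⊤) (hv : ∀ i, v i ≠ ⊤) (huv : ∀ i, u i ≤ v i) :
    (∫ x in Set.Iic s, hFun HRW H n a u x * Gof HRW (b - x)) *
        (∫ x in Set.Iic t, hFun HRW H n c v x * Gof HRW (d - x)) ≥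
      (∫ x in Set.Iic t, hFun HRW H n a u x * Gof HRW (b - x)) *
        (∫ x in Set.Iic s, hFun HRW H n c v x * Gof HRW (d - x)) ∧
    (∫ x in Set.Iic s, hFun HRW H n a u x * Gof HRW (b - x)) *
        (∫ x : ℝ, hFun HRW H n c v x * Gof HRW (d - x)) ≥
      (∫ x : ℝ, hFun HRW H n a u x * Gof HRW (b - x)) *
        (∫ x in Set.Iic s, hFun HRW H n c v x * Gof HRW (d - x)) :=
  statement6_general HRW H hG1 hG2 hG3 hG4 hH1 hH2 hH4 hH5 n hn a b c d s t hac hbd hst u v huv
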